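/- arXiv:2212.01736 — 2 statements merged into one kernel-verified Lean document; each statement's English description precedes it below -/
import Mathlib

section
/- Let L be a positive integer, let m₁, …, m_L be positive integers, let i ∈ {1, …, L}, let S > 0 be a real number and h ∈ ℂ. If Σ_{i'=i}^{L} m_{i'} ≤ log₂(6·S·|h|²), then 6·2^{m₁+⋯+m_{i−1}}·S·|h|² / (2^{m₁+⋯+m_L} − 1) ≥ 1 (where the exponent m₁+⋯+m_{i−1} is 0 when i = 1); consequently the square root of the left-hand side is at least 1. -/
open Finset

/-!
Splitting the users at `i` gives `2^(Σ m) = 2^(Σ_{i'<i} m) · 2^(Σ_{i'≥i} m)`, and the constraint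
says exactly `2^(Σ_{i'≥i} m) ≤ 6·S·|h|²`. Hence `2^(Σ m) - 1 < 2^(Σ m) ≤ 2^(Σ_{i'<i} m)·6·S·|h|²`.
-/

theorem sum_filter_lt_add_sum_filter_le {ι M : Type*} [Fintype ι] [LinearOrder ι]
    [AddCommMonoid M] (f : ι → M) (i : ι) :
    ∑ j ∈ univ.filter (· < i), f j + ∑ j ∈ univ.filter (i ≤ ·), f j = ∑ j, f j := by
  simpa only [not_lt] using sum_filter_add_sum_filter_not univ (· < i) f

theorem pow_le_of_natCast_le_logb {b x : ℝ} (hb : 1 < b) (hx : 0 ≤ x) {n : ℕ} (hn : 0 < n)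
    (h : (n : ℝ) ≤ Real.logb b x) : b ^ n ≤ x := by
  -- `logb b 0 = 0`, so the hypothesis rules out `x = 0`.
  have hx' : 0 < x := by
    refine hx.lt_of_ne fun hx0 => ?_
    rw [← hx0, Real.logb_zero] at h
    exact absurd h (by exact_mod_cast hn.not_ge)
  rw [← Real.rpow_natCast]
  exact (Real.le_logb_iff_rpow_le hb hx').mp h

theorem one_le_two_pow_mul_div_two_pow_add_sub_one {A B : ℕ} {x : ℝ} (hA : 0 < A)
    (hx : 2 ^ A ≤ x) : 1 ≤ 2 ^ B * x / (2 ^ (B + A) - 1) := by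
  have hden : (0 : ℝ) < 2 ^ (B + A) - 1 := by
    have : (1 : ℝ) < 2 ^ (B + A) := one_lt_pow₀ one_lt_two (by omega)
    linarith
  rw [one_le_div hden]
  calc (2 : ℝ) ^ (B + A) - 1 ≤ 2 ^ B * 2 ^ A := by rw [pow_add]; linarith
    _ ≤ 2 ^ B * x := by gcongr

theorem min_distance_K_user_general (L : ℕ) (m : Fin L → ℕ)
    (hm : ∀ i, 0 < m i) (i : Fin L) (S : ℝ) (hS : 0 < S) (h : ℂ)
    (hcon : ((∑ i' ∈ Finset.univ.filter (fun i' => i ≤ i'), m i' : ℕ) : ℝ) ≤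
      Real.logb 2 (6 * S * ‖h‖ ^ 2)) :
    1 ≤ 6 * 2 ^ (∑ i' ∈ Finset.univ.filter (fun i' => i' < i), m i') * S *
          ‖h‖ ^ 2 / (2 ^ (∑ i', m i') - 1) ∧
    1 ≤ Real.sqrt (6 * 2 ^ (∑ i' ∈ Finset.univ.filter (fun i' => i' < i), m i') * S *
          ‖h‖ ^ 2 / (2 ^ (∑ i', m i') - 1)) := by
  have hA : 0 < ∑ i' ∈ univ.filter (i ≤ ·), m i' :=
    (hm i).trans_le (single_le_sum (fun _ _ => Nat.zero_le _) (by simp))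
  have hpow := pow_le_of_natCast_le_logb one_lt_two (by positivity) hA hcon
  have key := one_le_two_pow_mul_div_two_pow_add_sub_one
    (B := ∑ i' ∈ univ.filter (· < i), m i') hA hpow
  rw [sum_filter_lt_add_sum_filter_le] at key
  have main : 1 ≤ 6 * 2 ^ (∑ i' ∈ univ.filter (· < i), m i') * S *
      ‖h‖ ^ 2 / (2 ^ (∑ i', m i') - 1) := by
    convert key using 2; ring
  exact ⟨main, Real.one_le_sqrt.mpr main⟩

/-- The K-user minimum-distance guarantee (38) of the paper: with `L` superimposed users
of modulation orders `m 0, …, m (L-1)` ordered by decreasing channel gain, if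
`Σ_{i' ≥ i} m i' ≤ log₂(6·S·|h|²)` then
`6·2^{Σ_{i' < i} m i'}·S·|h|² / (2^{Σ_{i'} m i'} - 1) ≥ 1`, and hence its square root
is at least 1. -/
theorem min_distance_K_user (L : ℕ) (hL : 0 < L) (m : Fin L → ℕ)
    (hm : ∀ i, 0 < m i) (i : Fin L) (S : ℝ) (hS : 0 < S) (h : ℂ)
    (hcon : ((∑ i' ∈ Finset.univ.filter (fun i' => i ≤ i'), m i' : ℕ) : ℝ) ≤
      Real.logb 2 (6 * S * ‖h‖ ^ 2)) :
    1 ≤ 6 * 2 ^ (∑ i' ∈ Finset.univ.filter (fun i' => i' < i), m i') * S *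
          ‖h‖ ^ 2 / (2 ^ (∑ i', m i') - 1) ∧
    1 ≤ Real.sqrt (6 * 2 ^ (∑ i' ∈ Finset.univ.filter (fun i' => i' < i), m i') * S *
          ‖h‖ ^ 2 / (2 ^ (∑ i', m i') - 1)) :=
  min_distance_K_user_general L m hm i S hS h hcon
end

section
/- Let N be a positive integer, let U₁, …, U_N be i.i.d. integrable real random variables with mean I and variance V > 0, and set S = Σ_{j=1}^{N} U_j. Suppose there is a constant B ≥ 0 such that for every λ ∈ ℝ, | P[ (S − N·I)/√(N·V) ≥ λ ] − Q(λ) | ≤ B/√N. Let ε ∈ (0,1), s ∈ (0,1], let M be a real number with M ≥ 2, and let λ ∈ ℝ be such that Q(λ) + B/√N + N^{−s} ≤ ε and log₂((M−1)/2) + s·log₂ N ≤ N·I − √(N·V)·λ. Then E[ 2^{ − max{ 0 , S − log₂((M−1)/2) } } ] ≤ ε. -/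
/-!
Split on the event `S < log₂((M-1)/2) + s·log₂ N`: on it the integrand is at most `1`, off it
at most `2^{-s·log₂ N} = N^{-s}`. The choice of `λ` puts the event inside
`{(S - N·I)/√(N·V) < -λ}`, whose probability is `1 - P[· ≥ -λ] ≤ 1 - Q(-λ) + B/√N = Q(λ) + B/√N`
by the Berry–Esseen hypothesis and the symmetry `Q(λ) + Q(-λ) = 1`.
-/

open MeasureTheory ProbabilityTheory

noncomputable def gaussQ (l : ℝ) : ℝ :=
  ∫ t in Set.Ioi l, (Real.sqrt (2 * Real.pi))⁻¹ * Real.exp (-t ^ 2 / 2)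

lemma gaussQ_eq_integral_gaussianPDFReal (l : ℝ) :
    gaussQ l = ∫ t in Set.Ioi l, gaussianPDFReal 0 1 t := by
  simp [gaussQ, gaussianPDFReal]

lemma gaussQ_add_gaussQ_neg (l : ℝ) : gaussQ l + gaussQ (-l) = 1 := by
  have heven : gaussQ (-l) = ∫ t in Set.Iic l, gaussianPDFReal 0 1 t := by
    rw [gaussQ_eq_integral_gaussianPDFReal, ← neg_neg l, ← integral_comp_neg_Ioi]
    simp [gaussianPDFReal]
  rw [heven, gaussQ_eq_integral_gaussianPDFReal, ← Set.compl_Ioi,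
    integral_add_compl measurableSet_Ioi (integrable_gaussianPDFReal 0 1),
    integral_gaussianPDFReal_eq_one 0 one_ne_zero]

lemma rpow_neg_max_sub_le {b : ℝ} (hb : 1 ≤ b) (x γ c : ℝ) :
    b ^ (-max 0 (x - γ)) ≤ (Set.Iio (γ + c)).indicator 1 x + b ^ (-c) := by
  by_cases hx : x < γ + c
  · have : b ^ (-max 0 (x - γ)) ≤ 1 :=
      Real.rpow_le_one_of_one_le_of_nonpos hb (neg_nonpos.mpr (le_max_left _ _))
    rw [Set.indicator_of_mem (Set.mem_Iio.mpr hx), Pi.one_apply]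
    linarith [Real.rpow_nonneg (zero_le_one.trans hb) (-c)]
  · rw [Set.indicator_of_notMem (mt Set.mem_Iio.mp hx), zero_add]
    exact Real.rpow_le_rpow_of_exponent_le hb (neg_le_neg (le_max_of_le_right (by linarith)))

section

variable {Ω : Type*} [MeasurableSpace Ω] {μ : Measure Ω} [IsProbabilityMeasure μ]

lemma integral_rpow_neg_max_sub_le {b : ℝ} (hb : 1 ≤ b) {S : Ω → ℝ} (hS : Measurable S)
    (γ c : ℝ) :
    ∫ ω, b ^ (-max 0 (S ω - γ)) ∂μ ≤ μ.real (S ⁻¹' Set.Iio (γ + c)) + b ^ (-c) := by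
  have hA : MeasurableSet (S ⁻¹' Set.Iio (γ + c)) := hS measurableSet_Iio
  have hAint : Integrable ((S ⁻¹' Set.Iio (γ + c)).indicator (1 : Ω → ℝ)) μ :=
    (integrable_const 1).indicator hA
  calc ∫ ω, b ^ (-max 0 (S ω - γ)) ∂μ
      ≤ ∫ ω, ((S ⁻¹' Set.Iio (γ + c)).indicator 1 ω + b ^ (-c)) ∂μ := by
        refine integral_mono_of_nonneg (.of_forall fun ω => ?_) ?_
          (.of_forall fun ω => rpow_neg_max_sub_le hb _ _ _)
        · exact Real.rpow_nonneg (zero_le_one.trans hb) _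
        · exact hAint.add (integrable_const _)
    _ = μ.real (S ⁻¹' Set.Iio (γ + c)) + b ^ (-c) := by
        rw [integral_add hAint (integrable_const _),
          integral_indicator_one hA, integral_const, probReal_univ, one_smul]

lemma measureReal_lt_le_of_abs_sub_gaussQ_le {Z : Ω → ℝ} (hZ : Measurable Z) {l β : ℝ}
    (h : |μ.real {ω | Z ω ≥ -l} - gaussQ (-l)| ≤ β) :
    μ.real {ω | Z ω < -l} ≤ gaussQ l + β := by
  have hcompl : {ω | Z ω < -l} = {ω | Z ω ≥ -l}ᶜ := by ext; simp
  rw [hcompl, probReal_compl_eq_one_sub (measurableSet_le measurable_const hZ)]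
  linarith [(abs_le.mp h).1, gaussQ_add_gaussQ_neg l]

end

theorem second_order_rate_iid_general {Ω : Type*} [MeasurableSpace Ω]
    (μ : Measure Ω) [IsProbabilityMeasure μ]
    (N : ℕ) (hN : 0 < N) (U : Fin N → Ω → ℝ)
    (hmeas : ∀ j, Measurable (U j))
    (I V : ℝ) (hV : 0 < V)
    (B : ℝ)
    (hBE : ∀ l : ℝ,
      |(μ {ω | ((∑ j, U j ω) - N * I) / Real.sqrt (N * V) ≥ l}).toReal - gaussQ l| ≤
        B / Real.sqrt N)
    (ε : ℝ)
    (s : ℝ)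
    (M : ℝ)
    (l : ℝ)
    (hl1 : gaussQ l + B / Real.sqrt N + (N : ℝ) ^ (-s) ≤ ε)
    (hl2 : Real.logb 2 ((M - 1) / 2) + s * Real.logb 2 N ≤
      N * I - Real.sqrt (N * V) * l) :
    ∫ ω, (2 : ℝ) ^ (-(max 0 ((∑ j, U j ω) - Real.logb 2 ((M - 1) / 2)))) ∂μ ≤ ε := by
  set S : Ω → ℝ := fun ω => ∑ j, U j ω
  have hS : Measurable S := Finset.measurable_sum _ fun j _ => hmeas j
  have hσ : 0 < Real.sqrt (N * V) := Real.sqrt_pos.mpr (by positivity)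
  have hNs : (2 : ℝ) ^ (-(s * Real.logb 2 N)) = (N : ℝ) ^ (-s) := by
    rw [← neg_mul, mul_comm, Real.rpow_mul zero_le_two,
      Real.rpow_logb two_pos one_lt_two.ne' (by positivity)]
  have hsub : S ⁻¹' Set.Iio (Real.logb 2 ((M - 1) / 2) + s * Real.logb 2 N) ⊆
      {ω | (S ω - N * I) / Real.sqrt (N * V) < -l} := by
    intro ω hω
    change _ / _ < -l
    rw [div_lt_iff₀ hσ]
    linarith [lt_of_lt_of_le (Set.mem_Iio.mp hω) hl2]
  calc ∫ ω, (2 : ℝ) ^ (-(max 0 (S ω - Real.logb 2 ((M - 1) / 2)))) ∂μ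
      ≤ μ.real (S ⁻¹' Set.Iio (Real.logb 2 ((M - 1) / 2) + s * Real.logb 2 N)) +
          (2 : ℝ) ^ (-(s * Real.logb 2 N)) := integral_rpow_neg_max_sub_le one_le_two hS _ _
    _ ≤ μ.real {ω | (S ω - N * I) / Real.sqrt (N * V) < -l} + (N : ℝ) ^ (-s) := by
        rw [hNs]
        exact add_le_add_left (measureReal_mono (μ := μ) hsub) _
    _ ≤ gaussQ l + B / Real.sqrt N + (N : ℝ) ^ (-s) := by
        gcongr
        exact measureReal_lt_le_of_abs_sub_gaussQ_le ((hS.sub_const _).div_const _) (hBE (-l))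
    _ ≤ ε := hl1

/-- The quantitative core of Proposition 1 of the paper: for i.i.d. information
densities `U 1, …, U N` with mean `I` and variance `V > 0` satisfying a Berry–Esseen
bound with constant `B`, and any `ε ∈ (0,1)`, `s ∈ (0,1]`, codebook size `M ≥ 2` and
`λ` with `Q(λ) + B/√N + N^{-s} ≤ ε` and
`log₂((M-1)/2) + s·log₂ N ≤ N·I - √(N·V)·λ`, the dependence-testing expression
satisfies `E[2^{-max{0, S - log₂((M-1)/2)}}] ≤ ε` where `S = Σ_j U j`. -/
theorem second_order_rate_iid {Ω : Type*} [MeasurableSpace Ω]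
    (μ : Measure Ω) [IsProbabilityMeasure μ]
    (N : ℕ) (hN : 0 < N) (U : Fin N → Ω → ℝ)
    (hmeas : ∀ j, Measurable (U j))
    (hint : ∀ j, Integrable (U j) μ)
    (hindep : iIndepFun U μ)
    (hident : ∀ j j', IdentDistrib (U j) (U j') μ μ)
    (I V : ℝ) (hV : 0 < V)
    (hmean : ∀ j, ∫ ω, U j ω ∂μ = I)
    (hvar : ∀ j, variance (U j) μ = V)
    (B : ℝ) (hB : 0 ≤ B)
    (hBE : ∀ l : ℝ,
      |(μ {ω | ((∑ j, U j ω) - N * I) / Real.sqrt (N * V) ≥ l}).toReal - gaussQ l| ≤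
        B / Real.sqrt N)
    (ε : ℝ) (hε0 : 0 < ε) (hε1 : ε < 1)
    (s : ℝ) (hs0 : 0 < s) (hs1 : s ≤ 1)
    (M : ℝ) (hM : 2 ≤ M)
    (l : ℝ)
    (hl1 : gaussQ l + B / Real.sqrt N + (N : ℝ) ^ (-s) ≤ ε)
    (hl2 : Real.logb 2 ((M - 1) / 2) + s * Real.logb 2 N ≤
      N * I - Real.sqrt (N * V) * l) :
    ∫ ω, (2 : ℝ) ^ (-(max 0 ((∑ j, U j ω) - Real.logb 2 ((M - 1) / 2)))) ∂μ ≤ ε :=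
  second_order_rate_iid_general μ N hN U hmeas I V hV B hBE ε s M l hl1 hl2
end
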